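/- Let D be a bounded c-John domain in ℝⁿ, n ≥ 2. Then there exists a central point x₀ ∈ D such that every point x ∈ D can be joined to x₀ by a rectifiable curve γ:[0,ℓ]→D, parametrized by its arc length, with γ(0) = x, γ(ℓ) = x₀, and dist(γ(t), ∂D) ≥ t/(4c²) for each t ∈ [0,ℓ]. -/
import Mathlib


open MeasureTheory Metric Set
open scoped ENNReal NNReal BigOperators

noncomputable section

/-- Euclidean `n`-space. -/
abbrev Eucl (n : ℕ) : Type := EuclideanSpace ℝ (Fin n)

/-- `D` is a `c`-John domain (bounded or unbounded): an open connected set such that each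
pair of points can be joined by a rectifiable curve, parametrized by arc length
(formalized as a `1`-Lipschitz parametrization on `[0, ℓ]`), along which
`dist(γ t, ∂D) ≥ min{t, ℓ - t}/c`. -/
def IsJohnDomain (n : ℕ) (c : ℝ) (D : Set (Eucl n)) : Prop :=
  IsOpen D ∧ IsConnected D ∧
    ∀ x₁ ∈ D, ∀ x₂ ∈ D, ∃ ℓ : ℝ, 0 ≤ ℓ ∧ ∃ γ : ℝ → Eucl n,
      γ 0 = x₁ ∧ γ ℓ = x₂ ∧ (∀ t ∈ Icc (0:ℝ) ℓ, γ t ∈ D) ∧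
      LipschitzOnWith 1 γ (Icc 0 ℓ) ∧
      ∀ t ∈ Icc (0:ℝ) ℓ, min t (ℓ - t) / c ≤ infDist (γ t) (frontier D)

/-- The ball `B(x, τ·dist(x, ∂G))`; by convention, if `∂G = ∅` (i.e. `G = ℝⁿ`)
it is all of `ℝⁿ`. -/
def tauBall (n : ℕ) (τ : ℝ) (G : Set (Eucl n)) (x : Eucl n) : Set (Eucl n) :=
  {y : Eucl n | edist x y < ENNReal.ofReal τ * EMetric.infEdist x (frontier G)}

/-- The fractional kernel `|u x - u y|^p / |x - y|^(n + δp)` as an extended real. -/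
def fracKernel (n : ℕ) (δ p : ℝ) (u : Eucl n → ℝ) (x y : Eucl n) : ℝ≥0∞ :=
  ENNReal.ofReal (|u x - u y| ^ p / dist x y ^ ((n : ℝ) + δ * p))

/-- The `p`-th power of the seminorm `|u|_{W^{δ,p}_τ(G)}`. -/
def fracEnergyTau (n : ℕ) (δ τ p : ℝ) (G : Set (Eucl n)) (u : Eucl n → ℝ) : ℝ≥0∞ :=
  ∫⁻ x in G, ∫⁻ y in tauBall n τ G x, fracKernel n δ p u x y ∂volume ∂volume

/-- The `p`-th power of the seminorm `|u|_{W^{δ,p}(G)}`. -/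
def fracEnergy (n : ℕ) (δ p : ℝ) (G : Set (Eucl n)) (u : Eucl n → ℝ) : ℝ≥0∞ :=
  ∫⁻ x in G, ∫⁻ y in G, fracKernel n δ p u x y ∂volume ∂volume

/-- The fractional `(δ,p)`-capacity of a compact set `K ⊆ G`:
`inf |u|_{W^{δ,p}(G)}^p` over `u ∈ C₀(G)` with `u ≥ 1` on `K`. -/
def fracCap (n : ℕ) (δ p : ℝ) (K G : Set (Eucl n)) : ℝ≥0∞ :=
  ⨅ (u : Eucl n → ℝ) (_ : Continuous u) (_ : HasCompactSupport u) (_ : tsupport u ⊆ G)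
    (_ : ∀ x ∈ K, 1 ≤ u x), fracEnergy n δ p G u

/-- The fractional `(δ,q,p)`-Hardy inequality holds in `G` with constant `C`. -/
def HasFracHardy (n : ℕ) (δ p q C : ℝ) (G : Set (Eucl n)) : Prop :=
  ∀ u : Eucl n → ℝ, Continuous u → HasCompactSupport u → tsupport u ⊆ G →
    (∫⁻ x in G, ENNReal.ofReal
        (|u x| ^ q / infDist x (frontier G) ^ (q * (δ + n * (1/q - 1/p)))) ∂volume)
      ≤ ENNReal.ofReal C * fracEnergy n δ p G u ^ (q / p)

/-- The closed axis-parallel cube with center `z` and half side length `r`. -/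
def cube (n : ℕ) (z : Eucl n) (r : ℝ) : Set (Eucl n) :=
  {x : Eucl n | ∀ i, |x i - z i| ≤ r}

/-- The quantity `|Q|^(-1-δ/n) ∫_Q |u - u_Q|` for the cube `Q = cube n z r`. -/
def aTerm (n : ℕ) (δ : ℝ) (u : Eucl n → ℝ) (z : Eucl n) (r : ℝ) : ℝ :=
  ((volume (cube n z r)).toReal) ^ (-(1:ℝ) - δ / n) *
    ∫ x in cube n z r, |u x - ⨍ y in cube n z r, u y ∂volume| ∂volume

/-- The seminorm `|u|_{A^{δ,p}_κ(G)}`: the supremum, over families `𝒬` of pairwise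
disjoint cubes `Q` (given by center-halfside pairs) with `κQ ⊆ G`, of the `L^p(G)`
norm of `∑_{Q ∈ 𝒬} (|Q|^(-1-δ/n) ∫_Q |u - u_Q|) χ_Q`. -/
def ASeminorm (n : ℕ) (κ δ p : ℝ) (G : Set (Eucl n)) (u : Eucl n → ℝ) : ℝ≥0∞ :=
  ⨆ (𝒬 : Set (Eucl n × ℝ)) (_ : ∀ c ∈ 𝒬, 0 < c.2 ∧ cube n c.1 (κ * c.2) ⊆ G)
    (_ : ∀ c ∈ 𝒬, ∀ c' ∈ 𝒬, c ≠ c' → cube n c.1 c.2 ∩ cube n c'.1 c'.2 = ∅),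
    (∫⁻ x in G,
        (∑' c : 𝒬, (cube n (c : Eucl n × ℝ).1 (c : Eucl n × ℝ).2).indicator
          (fun _ => ENNReal.ofReal (aTerm n δ u (c : Eucl n × ℝ).1 (c : Eucl n × ℝ).2)) x) ^ p
      ∂volume) ^ (1 / p)

/-- `Q` is a closed dyadic cube in `ℝⁿ`. -/
def IsDyadicCube (n : ℕ) (Q : Set (Eucl n)) : Prop :=
  ∃ (k : ℤ) (z : Fin n → ℤ),
    Q = {x : Eucl n | ∀ i, (z i : ℝ) * (2:ℝ) ^ k ≤ x i ∧ x i ≤ ((z i : ℝ) + 1) * (2:ℝ) ^ k}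

/-- `W` is a Whitney decomposition of the proper open set `G`: a countable family of
closed dyadic cubes with pairwise disjoint interiors whose union is `G`, with
`diam Q ≤ dist(Q, ∂G) ≤ 4 diam Q` for each cube `Q ∈ W`. -/
def IsWhitneyDecomposition (n : ℕ) (G : Set (Eucl n)) (W : Set (Set (Eucl n))) : Prop :=
  W.Countable ∧ (∀ Q ∈ W, IsDyadicCube n Q) ∧ ⋃₀ W = G ∧
    (W.Pairwise fun Q R => interior Q ∩ interior R = ∅) ∧
    ∀ Q ∈ W, (∀ x ∈ Q, Metric.diam Q ≤ infDist x (frontier G)) ∧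
      ∃ x ∈ Q, infDist x (frontier G) ≤ 4 * Metric.diam Q

/-- `lam` is an upper Assouad-type covering exponent for `E`: there is `C > 0` such
that for every `x ∈ E` and all `0 < r < R < 2 diam E`, the set `E ∩ B(x,R)` can be
covered by at most `C (R/r)^lam` balls centered in `E` of radius `r`. -/
def UpperAssouadBound (n : ℕ) (E : Set (Eucl n)) (lam : ℝ) : Prop :=
  ∃ C : ℝ, 0 < C ∧ ∀ x ∈ E, ∀ r R : ℝ, 0 < r → r < R →
    ENNReal.ofReal R < 2 * EMetric.diam E →
    ∃ F : Finset (Eucl n), ↑F ⊆ E ∧ (F.card : ℝ) ≤ C * (R / r) ^ lam ∧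
      E ∩ ball x R ⊆ ⋃ y ∈ F, ball y r

/-- The upper Assouad dimension of `E`. -/
def upperAssouadDim (n : ℕ) (E : Set (Eucl n)) : ℝ :=
  sInf {lam : ℝ | 0 ≤ lam ∧ UpperAssouadBound n E lam}

/-- `lam` is a lower Assouad-type exponent for `E`: there is `C > 0` such that for
every `x ∈ E` and all `0 < r < R < 2 diam E`, at least `C (R/r)^lam` balls centered
in `E` of radius `r` are needed to cover `E ∩ B(x,R)`. -/
def LowerAssouadBound (n : ℕ) (E : Set (Eucl n)) (lam : ℝ) : Prop :=
  ∃ C : ℝ, 0 < C ∧ ∀ x ∈ E, ∀ r R : ℝ, 0 < r → r < R →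
    ENNReal.ofReal R < 2 * EMetric.diam E →
    ∀ F : Finset (Eucl n), ↑F ⊆ E → (E ∩ ball x R ⊆ ⋃ y ∈ F, ball y r) →
      C * (R / r) ^ lam ≤ (F.card : ℝ)

/-- The lower Assouad dimension of `E`. -/
def lowerAssouadDim (n : ℕ) (E : Set (Eucl n)) : ℝ :=
  sSup {lam : ℝ | 0 ≤ lam ∧ LowerAssouadBound n E lam}

end

set_option maxHeartbeats 1000000 in
/-- Central point of a bounded John domain: if `D ⊆ ℝⁿ`, `n ≥ 2`, is a
bounded `c`-John domain, then there is a central point `x₀ ∈ D` such that every `x ∈ D`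
can be joined to `x₀` by a rectifiable curve `γ : [0,ℓ] → D` parametrized by arc length
with `γ 0 = x`, `γ ℓ = x₀` and `dist(γ t, ∂D) ≥ t/(4c²)` for all `t ∈ [0,ℓ]`. -/
theorem statement15 (n : ℕ) (hn : 2 ≤ n) (c : ℝ) (hc : 1 ≤ c) (D : Set (Eucl n))
    (hD : IsJohnDomain n c D) (hDb : Bornology.IsBounded D) :
    ∃ x₀ ∈ D, ∀ x ∈ D, ∃ ℓ : ℝ, 0 ≤ ℓ ∧ ∃ γ : ℝ → Eucl n,
      γ 0 = x ∧ γ ℓ = x₀ ∧ (∀ t ∈ Icc (0:ℝ) ℓ, γ t ∈ D) ∧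
      LipschitzOnWith 1 γ (Icc 0 ℓ) ∧
      ∀ t ∈ Icc (0:ℝ) ℓ, t / (4 * c ^ 2) ≤ infDist (γ t) (frontier D) := by
  obtain ⟨hopen, hconn, hjohn⟩ := hD
  obtain ⟨y₀, hy₀⟩ := hconn.nonempty
  have hc0 : (0:ℝ) < c := lt_of_lt_of_le one_pos hc
  set F := frontier D with hF
  -- D is not the whole space
  have hne : D ≠ univ := by
    intro h
    obtain ⟨r, hr⟩ := hDb.subset_ball 0
    have hmem : EuclideanSpace.single (⟨0, by omega⟩ : Fin n) (|r| + 1) ∈ D := by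
      rw [h]; exact mem_univ _
    have h1 := hr hmem
    rw [mem_ball, dist_zero_right, EuclideanSpace.norm_single, Real.norm_eq_abs,
      abs_of_nonneg (by positivity)] at h1
    have := le_abs_self r
    linarith
  have hFne : F.Nonempty := nonempty_frontier_iff.2 ⟨⟨y₀, hy₀⟩, hne⟩
  have hFclosed : IsClosed F := isClosed_frontier
  -- distance function to boundary, positivity on D
  have hpos : ∀ y ∈ D, 0 < infDist y F := by
    intro y hy
    refine (hFclosed.notMem_iff_infDist_pos hFne).1 ?_
    intro hyF
    have : y ∈ closure D \ D := by rw [← hopen.frontier_eq]; exact hyF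
    exact this.2 hy
  -- supremum of distances
  set E := (fun y => infDist y F) '' D with hE
  have hEne : E.Nonempty := ⟨_, y₀, hy₀, rfl⟩
  have hEbdd : BddAbove E := ((lipschitz_infDist_pt F).isBounded_image hDb).bddAbove
  set S := sSup E with hSdef
  have hle : ∀ y ∈ D, infDist y F ≤ S := fun y hy => le_csSup hEbdd ⟨y, hy, rfl⟩
  have hS0 : 0 < S := lt_of_lt_of_le (hpos y₀ hy₀) (hle y₀ hy₀)
  obtain ⟨_, ⟨x₀, hx₀D, rfl⟩, hx₀⟩ := exists_lt_of_lt_csSup hEne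
    (show 9/10 * S < S by linarith)
  have hx₀' : 9/10 * S < infDist x₀ F := hx₀
  refine ⟨x₀, hx₀D, ?_⟩
  intro x hx
  obtain ⟨ℓ, hℓ, γ, h0, hℓγ, hmem, hlip, hdist⟩ := hjohn x hx x₀ hx₀D
  refine ⟨ℓ, hℓ, γ, h0, hℓγ, hmem, hlip, ?_⟩
  -- midpoint bound : ℓ ≤ 2 c S
  have hmidmem : ℓ/2 ∈ Icc (0:ℝ) ℓ := ⟨by linarith, by linarith⟩
  have hmid : ℓ ≤ 2 * c * S := by
    have h1 := hdist (ℓ/2) hmidmem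
    have h2 := hle _ (hmem (ℓ/2) hmidmem)
    have h3 : min (ℓ/2) (ℓ - ℓ/2) = ℓ/2 := by rw [min_eq_left]; linarith
    rw [h3, div_le_iff₀ hc0] at h1
    nlinarith
  intro t ht
  obtain ⟨ht0, htℓ⟩ := ht
  rcases le_or_gt (ℓ/(4*c+1)) (ℓ - t) with hcase | hcase
  · -- John bound suffices
    have h1 := hdist t ⟨ht0, htℓ⟩
    have h2 : t / (4 * c ^ 2) ≤ min t (ℓ - t) / c := by
      rw [div_le_div_iff₀ (by positivity) hc0]
      rcases min_cases t (ℓ - t) with ⟨hm, _⟩ | ⟨hm, _⟩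
      · rw [hm]
        nlinarith [mul_nonneg (mul_nonneg ht0 hc0.le) (show (0:ℝ) ≤ 4*c - 1 by linarith)]
      · rw [hm]
        rw [div_le_iff₀ (by linarith : (0:ℝ) < 4*c+1)] at hcase
        have h4 : t ≤ 4*c*(ℓ-t) := by nlinarith
        nlinarith [mul_le_mul_of_nonneg_right h4 hc0.le]
    exact h2.trans h1
  · -- close to x₀
    have hdγ : dist (γ t) x₀ ≤ ℓ - t := by
      have h5 := hlip.dist_le_mul t ⟨ht0, htℓ⟩ ℓ ⟨hℓ, le_refl ℓ⟩
      rw [← hℓγ]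
      calc dist (γ t) (γ ℓ) ≤ 1 * dist t ℓ := by exact_mod_cast h5
        _ = |t - ℓ| := by rw [one_mul, Real.dist_eq]
        _ = ℓ - t := by rw [abs_of_nonpos (by linarith)]; ring
    have h1 : infDist x₀ F - dist (γ t) x₀ ≤ infDist (γ t) F := by
      have h6 := infDist_le_infDist_add_dist (x := x₀) (y := γ t) (s := F)
      rw [dist_comm] at h6
      linarith
    have h2 : 9/10 * S - (ℓ - t) ≤ infDist (γ t) F := by linarith
    have hs1 : (ℓ - t) * (4*c+1) ≤ 2*c*S := by
      rw [lt_div_iff₀ (by linarith : (0:ℝ) < 4*c+1)] at hcase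
      linarith
    have key : t / (4 * c ^ 2) ≤ 9/10 * S - (ℓ - t) := by
      rw [div_le_iff₀ (by positivity)]
      have e1 : 4*c^2*((ℓ-t)*(4*c+1)) ≤ 4*c^2*(2*c*S) :=
        mul_le_mul_of_nonneg_left hs1 (by positivity)
      have e2 : t*(4*c+1) ≤ 2*c*S*(4*c+1) :=
        mul_le_mul_of_nonneg_right (htℓ.trans hmid) (by linarith)
      have e3 : 0 ≤ 2*c*S*(16*c^2-11*c-5) := by
        apply mul_nonneg (by positivity)
        nlinarith [sq_nonneg (c-1)]
      have e4 : t*(4*c+1) ≤ ((9/10*S - (ℓ-t)) * (4*c^2))*(4*c+1) := by linarith [e1, e2, e3]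
      exact le_of_mul_le_mul_right e4 (by linarith)
    linarith
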